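/- arXiv:1809.00142 — 2 statements merged into one kernel-verified Lean document; each statement's English description precedes it below -/
import Mathlib

section
/- For every real ε > 0 there exists a loopless digraph D with χ⃗_c(D) − χ⃗*(D) ≥ 1 − ε; that is, the gap between the circular dichromatic number and the star dichromatic number can be arbitrarily close to 1. -/
open Finset

variable {V : Type*}

/-- `v :: l` forms a directed cycle of the digraph with arc relation `E`:
the vertices are pairwise distinct and each one has an arc to the next, cyclically. -/
def IsDicycle (E : V → V → Prop) (v : V) (l : List V) : Prop :=
  (v :: l).Nodup ∧ List.Chain E v (l ++ [v])

/-- The vertex set `A` induces an acyclic subdigraph of the digraph `E`: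
no directed cycle of `E` has all of its vertices in `A`. -/
def AcyclicOn (E : V → V → Prop) (A : Set V) : Prop :=
  ∀ v l, IsDicycle E v l → ¬ (∀ x ∈ v :: l, x ∈ A)

/-- The open arc of length 1 in `ℝ/pℤ` starting at (the image of) `a`. -/
def unitArc (p a : ℝ) : Set (AddCircle p) :=
  (fun x : ℝ => (x : AddCircle p)) '' Set.Ioo a (a + 1)

/-- An acyclic `p`-colouring of the digraph `E` : the preimage of every open arc
of length 1 induces an acyclic subdigraph. -/
def IsAcyclicColouring (E : V → V → Prop) (p : ℝ) (c : V → AddCircle p) : Prop :=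
  ∀ a : ℝ, AcyclicOn E (c ⁻¹' unitArc p a)

/-- The star dichromatic number of a digraph. -/
noncomputable def starDichromatic (E : V → V → Prop) : ℝ :=
  sInf {p : ℝ | 1 ≤ p ∧ ∃ c : V → AddCircle p, IsAcyclicColouring E p c}

/-- A weak circular `p`-colouring in the sense of Bokal et al. -/
def IsWeakCircularColouring (E : V → V → Prop) (p : ℝ) (c : V → AddCircle p) : Prop :=
  (∀ u w, E u w → c u = c w ∨
    ∃ r : ℝ, r ∈ Set.Ico (0 : ℝ) p ∧ (r : AddCircle p) = c w - c u ∧ 1 ≤ r) ∧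
  ∀ t : AddCircle p, AcyclicOn E (c ⁻¹' {t})

/-- The circular dichromatic number of a digraph. -/
noncomputable def circularDichromatic (E : V → V → Prop) : ℝ :=
  sInf {p : ℝ | 1 ≤ p ∧ ∃ c : V → AddCircle p, IsWeakCircularColouring E p c}

/-- The fractional dichromatic number: the optimal value of the covering linear
program over the acyclic vertex subsets. -/
noncomputable def fracDichromatic [Fintype V] [DecidableEq V] (E : V → V → Prop) : ℝ :=
  sInf {r : ℝ | ∃ x : Finset V → ℝ, (∀ A, 0 ≤ x A) ∧
    (∀ A : Finset V, x A ≠ 0 → AcyclicOn E ↑A) ∧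
    (∀ v : V, 1 ≤ ∑ A ∈ Finset.univ.filter (fun A : Finset V => v ∈ A), x A) ∧
    r = ∑ A : Finset V, x A}

/-- The cyclic interval `{i, i+1, ..., i+d-1}` in `ℤ/kℤ`. -/
def cycInterval (k : ℕ) (i : ZMod k) (d : ℕ) : Set (ZMod k) :=
  {j : ZMod k | ∃ t : ℕ, t < d ∧ j = i + (t : ZMod k)}

/-- An acyclic `(k,d)`-colouring of the digraph `E`. -/
def IsAcyclicKDColouring (E : V → V → Prop) (k d : ℕ) (c : V → ZMod k) : Prop :=
  ∀ i : ZMod k, AcyclicOn E (c ⁻¹' cycInterval k i d)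

/-- The dichromatic number: the least `k` such that the vertex set can be partitioned
into `k` classes each inducing an acyclic subdigraph. -/
noncomputable def dichromatic (E : V → V → Prop) : ℕ :=
  sInf {k : ℕ | ∃ c : V → Fin k, ∀ i : Fin k, AcyclicOn E (c ⁻¹' {i})}

/-- `v :: l` forms a cycle of the simple graph `G` (of length at least 3). -/
def IsGraphCycle (G : SimpleGraph V) (v : V) (l : List V) : Prop :=
  3 ≤ (v :: l).length ∧ (v :: l).Nodup ∧ List.Chain G.Adj v (l ++ [v])

/-- The vertex set `A` induces a forest (acyclic subgraph) in the simple graph `G`. -/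
def ForestOn (G : SimpleGraph V) (A : Set V) : Prop :=
  ∀ v l, IsGraphCycle G v l → ¬ (∀ x ∈ v :: l, x ∈ A)

/-- A `(k,d)`-tree-colouring of a graph. -/
def IsTreeColouring (G : SimpleGraph V) (k d : ℕ) (c : V → ZMod k) : Prop :=
  ∀ i : ZMod k, ForestOn G (c ⁻¹' cycInterval k i d)

/-- The circular vertex arboricity of a graph. -/
noncomputable def circularVertexArboricity (G : SimpleGraph V) : ℝ :=
  sInf {r : ℝ | ∃ k d : ℕ, 1 ≤ d ∧ d ≤ k ∧
    (∃ c : V → ZMod k, IsTreeColouring G k d c) ∧ r = (k : ℝ) / d}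

/-- `E` is an orientation of the simple graph `G`: for each edge exactly one of the
two possible arcs is present, and there are no other arcs. -/
def IsOrientation (G : SimpleGraph V) (E : V → V → Prop) : Prop :=
  ∀ u w, ((E u w ∨ E w u) ↔ G.Adj u w) ∧ ¬ (E u w ∧ E w u)

/-- The star dichromatic number of a graph: the maximum over all orientations. -/
noncomputable def starDichromaticGraph (G : SimpleGraph V) : ℝ :=
  sSup {r : ℝ | ∃ E : V → V → Prop, IsOrientation G E ∧ r = starDichromatic E}

/-- The fractional dichromatic number of a graph: the maximum over all orientations. -/
noncomputable def fracDichromaticGraph [Fintype V] [DecidableEq V] (G : SimpleGraph V) : ℝ :=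
  sSup {r : ℝ | ∃ E : V → V → Prop, IsOrientation G E ∧ r = fracDichromatic E}

/-- The fractional chromatic number of a graph: the optimal value of the covering
linear program over the independent vertex subsets. -/
noncomputable def fractionalChromatic [Fintype V] [DecidableEq V] (G : SimpleGraph V) : ℝ :=
  sInf {r : ℝ | ∃ x : Finset V → ℝ, (∀ A, 0 ≤ x A) ∧
    (∀ A : Finset V, x A ≠ 0 → ∀ u ∈ A, ∀ w ∈ A, ¬ G.Adj u w) ∧
    (∀ v : V, 1 ≤ ∑ A ∈ Finset.univ.filter (fun A : Finset V => v ∈ A), x A) ∧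
    r = ∑ A : Finset V, x A}

/-- A `(k,d)`-colouring of a graph in the sense of Vince: colours of adjacent vertices
have circular `k`-distance at least `d`. -/
def IsVinceColouring (G : SimpleGraph V) (k d : ℕ) (c : V → ZMod k) : Prop :=
  ∀ u w, G.Adj u w → d ≤ (c u - c w).val ∧ d ≤ (c w - c u).val

/-- Vince's star (circular) chromatic number of a graph. -/
noncomputable def starChromatic (G : SimpleGraph V) : ℝ :=
  sInf {r : ℝ | ∃ k d : ℕ, 1 ≤ d ∧ d ≤ k ∧
    (∃ c : V → ZMod k, IsVinceColouring G k d c) ∧ r = (k : ℝ) / d}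

/-- The circulant digraph `C⃗(k,d)` on `ℤ/kℤ`: each vertex `i` has the outgoing arcs
`(i, i+d), (i, i+d+1), …, (i, i+k-1)`. -/
def circulantDigraph (k d : ℕ) : ZMod k → ZMod k → Prop :=
  fun i j => ∃ t : ℕ, d ≤ t ∧ t < k ∧ j = i + (t : ZMod k)

/-- The directed cycle `C⃗_n` on `ℤ/nℤ`. -/
def dirCycle (n : ℕ) : ZMod n → ZMod n → Prop :=
  fun i j => j = i + 1

/-- The digraph `D^s` obtained from `D` by adding a dominating source `none`. -/
def addSource (E : V → V → Prop) : Option V → Option V → Prop :=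
  fun a b => match a, b with
  | none, some _ => True
  | some u, some w => E u w
  | _, none => False

/-- The wheel graph `W_k`: a cycle on `ℤ/kℤ` together with a hub `none` adjacent to
every cycle vertex. -/
def wheelGraph (k : ℕ) : SimpleGraph (Option (ZMod k)) :=
  SimpleGraph.fromRel (fun a b => match a, b with
    | none, some _ => True
    | some i, some j => j = i + 1
    | _, none => False)

/-!
The digraph is the directed `n`-cycle with a dominating source added; every dicycle uses all
cycle vertices. Colouring cycle vertex `k` by `k/(n-1)` in `ℝ/(n/(n-1))ℤ` leaves a gap of length
`1/(n-1)` outside every open unit arc, so each such arc misses a cycle vertex and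
`χ⃗* ≤ n/(n-1)`. In a weak circular `q`-colouring with `q < 2`, measure colours from the
source: each cycle vertex sits at `0` or in `[1, q)`. A colour change along a cycle arc goes
from `0` into `[1, q)`, or from `[1, q)` strictly downwards within `[1, q)` (a step of length
at least `1` wraps around). Around the cycle this forces all cycle vertices to share one
colour, a monochromatic dicycle; hence `χ⃗_c ≥ 2`.
-/

section Digraph

variable {W : Type*} {E : V → V → Prop} {F : W → W → Prop}

lemma List.exists_rel_mem_of_isChain {R : V → V → Prop} {b : V} :
    ∀ {a : V} {L : List V}, List.IsChain R (a :: (L ++ [b])) →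
      ∀ x ∈ a :: L, ∃ y ∈ L ++ [b], R x y
  | a, [], h, x, hx => by
    obtain rfl : x = a := List.mem_singleton.mp hx
    exact ⟨b, List.mem_singleton_self b, (List.isChain_pair.mp h)⟩
  | a, c :: L, h, x, hx => by
    rw [List.cons_append, List.isChain_cons_cons] at h
    rcases List.mem_cons.mp hx with rfl | hx
    · exact ⟨c, List.mem_cons_self .., h.1⟩
    · obtain ⟨y, hy, hxy⟩ := List.exists_rel_mem_of_isChain h.2 x hx
      exact ⟨y, List.mem_cons_of_mem c hy, hxy⟩

lemma IsDicycle.exists_rel_mem {v : V} {l : List V} (h : IsDicycle E v l) {x : V}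
    (hx : x ∈ v :: l) : ∃ y ∈ v :: l, E x y := by
  obtain ⟨y, hy, hxy⟩ := List.exists_rel_mem_of_isChain h.2 x hx
  refine ⟨y, ?_, hxy⟩
  rcases List.mem_append.mp hy with hy | hy
  · exact List.mem_cons_of_mem v hy
  · rw [List.mem_singleton.mp hy]
    exact List.mem_cons_self ..

lemma IsDicycle.map {f : V → W} (hf : Function.Injective f) (hEF : ∀ u w, E u w → F (f u) (f w))
    {v : V} {l : List V} (h : IsDicycle E v l) : IsDicycle F (f v) (l.map f) := by
  refine ⟨by simpa using h.1.map hf, ?_⟩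
  have := (List.isChain_map f (R := F)).mpr (List.IsChain.imp hEF h.2)
  simp only [List.map_cons, List.map_append, List.map_nil] at this
  exact this

lemma AcyclicOn.comap {f : V → W} (hf : Function.Injective f)
    (hEF : ∀ u w, E u w → F (f u) (f w)) {A : Set W} (h : AcyclicOn F A) :
    AcyclicOn E (f ⁻¹' A) := fun v l hc hA =>
  h _ _ (hc.map hf hEF) (by simpa using hA)

lemma acyclicOn_of_subsingleton (hE : ∀ v, ¬ E v v) {A : Set V} (hA : A.Subsingleton) :
    AcyclicOn E A := by
  rintro v (_ | ⟨b, t⟩) ⟨hnd, hch⟩ hall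
  · exact hE v (List.isChain_pair.mp hch)
  · obtain rfl : v = b := hA (hall v (by simp)) (hall b (by simp))
    exact (List.nodup_cons.mp hnd).1 (List.mem_cons_self ..)

lemma IsAcyclicColouring.comp {f : V → W} (hf : Function.Injective f)
    (hEF : ∀ u w, E u w → F (f u) (f w)) {p : ℝ} {c : W → AddCircle p}
    (hc : IsAcyclicColouring F p c) : IsAcyclicColouring E p (c ∘ f) := fun a =>
  (hc a).comap hf hEF

lemma IsWeakCircularColouring.comp {f : V → W} (hf : Function.Injective f)
    (hEF : ∀ u w, E u w → F (f u) (f w)) {p : ℝ} {c : W → AddCircle p}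
    (hc : IsWeakCircularColouring F p c) : IsWeakCircularColouring E p (c ∘ f) :=
  ⟨fun u w huw => hc.1 _ _ (hEF u w huw), fun t => (hc.2 t).comap hf hEF⟩

lemma starDichromatic_comap_equiv (e : V ≃ W) (F : W → W → Prop) :
    starDichromatic (fun u w => F (e u) (e w)) = starDichromatic F := by
  unfold starDichromatic
  congr 1
  ext p
  refine and_congr_right fun _ => ⟨fun ⟨c, hc⟩ => ⟨c ∘ e.symm, ?_⟩, fun ⟨c, hc⟩ => ⟨c ∘ e, ?_⟩⟩
  · exact hc.comp e.symm.injective (by simp)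
  · exact hc.comp e.injective fun _ _ h => h

lemma circularDichromatic_comap_equiv (e : V ≃ W) (F : W → W → Prop) :
    circularDichromatic (fun u w => F (e u) (e w)) = circularDichromatic F := by
  unfold circularDichromatic
  congr 1
  ext p
  refine and_congr_right fun _ => ⟨fun ⟨c, hc⟩ => ⟨c ∘ e.symm, ?_⟩, fun ⟨c, hc⟩ => ⟨c ∘ e, ?_⟩⟩
  · exact hc.comp e.symm.injective (by simp)
  · exact hc.comp e.injective fun _ _ h => h

lemma exists_isWeakCircularColouring [Fintype V] [Nonempty V] (hE : ∀ v, ¬ E v v) :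
    ∃ c : V → AddCircle (Fintype.card V : ℝ),
      IsWeakCircularColouring E (Fintype.card V : ℝ) c := by
  set N : ℝ := (Fintype.card V : ℝ)
  have : Fact (0 < N) := ⟨by simp [N, Fintype.card_pos]⟩
  let e := Fintype.equivFin V
  have he : ∀ v, ((e v : ℕ) : ℝ) ∈ Set.Ico 0 (0 + N) := fun v =>
    ⟨by positivity, by simp [N, (e v).isLt]⟩
  refine ⟨fun v => ((e v : ℕ) : ℝ), fun u w huw => Or.inr ?_, fun t => ?_⟩
  · obtain ⟨hu0, huN⟩ := he u
    obtain ⟨hw0, hwN⟩ := he w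
    have hne : (e u : ℕ) ≠ e w := fun h => hE u (by rwa [← e.injective (Fin.ext h)] at huw)
    rcases hne.lt_or_gt with hlt | hlt
    · have : ((e u : ℕ) : ℝ) + 1 ≤ (e w : ℕ) := by exact_mod_cast hlt
      exact ⟨(e w : ℕ) - (e u : ℕ), ⟨by linarith, by linarith⟩, (AddCircle.coe_sub ..).symm,
        by linarith⟩
    · have : ((e w : ℕ) : ℝ) + 1 ≤ (e u : ℕ) := by exact_mod_cast hlt
      have : ((e u : ℕ) : ℝ) + 1 ≤ N := by simp only [N]; exact_mod_cast (e u).isLt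
      refine ⟨(e w : ℕ) - (e u : ℕ) + N, ⟨by linarith, by linarith⟩, ?_, by linarith⟩
      rw [AddCircle.coe_add_period, AddCircle.coe_sub]
  · refine acyclicOn_of_subsingleton hE fun u hu w hw => e.injective (Fin.ext ?_)
    have huw : (((e u : ℕ) : ℝ) : AddCircle N) = ((e w : ℕ) : ℝ) := hu.trans hw.symm
    rw [AddCircle.coe_eq_coe_iff_of_mem_Ico (he u) (he w)] at huw
    exact_mod_cast huw

end Digraph

lemma ZMod.forall_of_imp_add_one {n : ℕ} [NeZero n] {P : ZMod n → Prop} (i : ZMod n) (hi : P i)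
    (hP : ∀ j, P j → P (j + 1)) (j : ZMod n) : P j := by
  have hk : ∀ k : ℕ, P (i + k) := by
    intro k
    induction k with
    | zero => simpa using hi
    | succ k ih => simpa [add_assoc] using hP _ ih
  obtain ⟨k, hk'⟩ := ZMod.natCast_zmod_surjective (j - i)
  simpa [hk'] using hk k

lemma ZMod.apply_eq_apply_of_step {n : ℕ} [NeZero n] {f : ZMod n → ℝ}
    (hf : ∀ i, f (i + 1) = f i ∨ 1 ≤ f (i + 1) ∧ (f i < 1 ∨ f (i + 1) < f i)) (i j : ZMod n) :
    f j = f i := by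
  by_cases hhigh : ∃ i₀, 1 ≤ f i₀
  · obtain ⟨i₀, hi₀⟩ := hhigh
    have hge : ∀ k, 1 ≤ f k := ZMod.forall_of_imp_add_one i₀ hi₀ fun k hk => by
      rcases hf k with h | ⟨h, -⟩
      · exact h ▸ hk
      · exact h
    have hanti : ∀ i j, f j ≤ f i := fun i => ZMod.forall_of_imp_add_one i le_rfl fun k hk => by
      refine le_trans ?_ hk
      rcases hf k with h | ⟨-, h | h⟩
      · exact h.le
      · exact absurd (hge k) h.not_ge
      · exact h.le
    exact le_antisymm (hanti i j) (hanti j i)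
  · simp only [not_exists, not_le] at hhigh
    refine ZMod.forall_of_imp_add_one (P := fun k => f k = f i) i rfl (fun k hk => ?_) j
    rcases hf k with h | ⟨h, -⟩
    · exact h.trans hk
    · exact absurd h (hhigh _).not_ge

lemma coe_notMem_unitArc {p a x : ℝ} (hx : x ∈ Set.Ico (a + 1) (a + p)) :
    (x : AddCircle p) ∉ unitArc p a := by
  have : Fact (0 < p) := ⟨by linarith [hx.1, hx.2]⟩
  rintro ⟨y, hy, hyx⟩
  rw [AddCircle.coe_eq_coe_iff_of_mem_Ico (a := a) ⟨hy.1.le, by linarith [hy.2, hx.1, hx.2]⟩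
    ⟨by linarith [hx.1], hx.2⟩] at hyx
  linarith [hy.2, hx.1]

lemma exists_intCast_mul_notMem_unitArc {p s : ℝ} (hs : 0 < s) (hsp : s ≤ p - 1) (a : ℝ) :
    ∃ k : ℤ, ((k * s : ℝ) : AddCircle p) ∉ unitArc p a := by
  refine ⟨⌈(a + 1) / s⌉, coe_notMem_unitArc ⟨?_, ?_⟩⟩
  · rw [← div_le_iff₀ hs]
    exact Int.le_ceil _
  · have := Int.ceil_lt_add_one ((a + 1) / s)
    rw [div_add_one hs.ne', lt_div_iff₀ hs] at this
    linarith

lemma eq_or_one_le_of_coe_sub {q ξ ξ' : ℝ} (hq : q < 2) (hξ : ξ ∈ Set.Ico 0 (0 + q))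
    (hξ' : ξ' ∈ Set.Ico 0 (0 + q)) (hξ01 : ξ = 0 ∨ 1 ≤ ξ) (hξ'01 : ξ' = 0 ∨ 1 ≤ ξ')
    (h : (ξ : AddCircle q) = ξ' ∨
      ∃ r : ℝ, r ∈ Set.Ico 0 q ∧ (r : AddCircle q) = ξ' - ξ ∧ 1 ≤ r) :
    ξ' = ξ ∨ 1 ≤ ξ' ∧ (ξ < 1 ∨ ξ' < ξ) := by
  have : Fact (0 < q) := ⟨by linarith [hξ.1, hξ.2]⟩
  rcases h with h | ⟨r, hr, hrξ, hr1⟩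
  · exact Or.inl ((AddCircle.coe_eq_coe_iff_of_mem_Ico hξ hξ').mp h).symm
  rcases hξ01 with rfl | hξ1
  · rw [AddCircle.coe_zero, sub_zero,
      AddCircle.coe_eq_coe_iff_of_mem_Ico (by simpa using hr) hξ'] at hrξ
    exact Or.inr ⟨hrξ ▸ hr1, Or.inl zero_lt_one⟩
  -- from `ξ ≥ 1` a step of length `r ≥ 1` wraps around once, since `ξ + r ≥ 2 > q`
  have hwrap : ((ξ + r - q : ℝ) : AddCircle q) = ξ' := by
    rw [AddCircle.coe_sub, AddCircle.coe_period, sub_zero, AddCircle.coe_add, hrξ]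
    abel
  rw [AddCircle.coe_eq_coe_iff_of_mem_Ico ⟨by linarith, by linarith [hr.2, hξ.2]⟩ hξ'] at hwrap
  refine Or.inr ⟨hξ'01.resolve_left fun h => ?_, Or.inr (by linarith [hr.2])⟩
  linarith

section SourcedCycle

variable {n : ℕ}

lemma addSource_dirCycle_irrefl (hn : 2 ≤ n) :
    ∀ v, ¬ addSource (dirCycle n) v v
  | none => id
  | some i => by
    have : Fact (1 < n) := ⟨hn⟩
    simp [addSource, dirCycle]

lemma isDicycle_dirCycle [NeZero n] :
    IsDicycle (dirCycle n) 0 ((List.range (n - 1)).map fun k => ((k + 1 : ℕ) : ZMod n)) := by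
  obtain ⟨m, rfl⟩ : ∃ m, n = m + 1 := Nat.exists_eq_add_one.mpr (NeZero.pos n)
  have hcycle : (0 : ZMod (m + 1)) :: (List.range m).map (fun k => ((k + 1 : ℕ) : ZMod (m + 1)))
      = (List.range (m + 1)).map Nat.cast := by
    simp [List.range_succ_eq_map, Function.comp_def]
  refine ⟨?_, ?_⟩
  · rw [Nat.add_sub_cancel, hcycle]
    refine List.nodup_range.map_on fun a ha b hb hab => ?_
    rw [List.mem_range] at ha hb
    simpa [ZMod.val_cast_of_lt ha, ZMod.val_cast_of_lt hb] using congrArg ZMod.val hab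
  · have hclosed : (List.range (m + 2)).map (Nat.cast : ℕ → ZMod (m + 1))
        = (0 :: (List.range m).map fun k => ((k + 1 : ℕ) : ZMod (m + 1))) ++ [0] := by
      rw [List.range_succ, List.map_append, hcycle]
      simp
    rw [Nat.add_sub_cancel]
    change List.IsChain _ ((0 :: (List.range m).map fun k => ((k + 1 : ℕ) : ZMod (m + 1))) ++ [0])
    rw [← hclosed, List.isChain_map, List.isChain_range_succ]
    intro k _
    simp [dirCycle]

lemma not_acyclicOn_dirCycle_univ [NeZero n] : ¬ AcyclicOn (dirCycle n) Set.univ :=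
  fun h => h _ _ isDicycle_dirCycle fun _ _ => trivial

lemma some_mem_of_isDicycle_addSource_dirCycle [NeZero n] {v : Option (ZMod n)}
    {l : List (Option (ZMod n))} (h : IsDicycle (addSource (dirCycle n)) v l) (j : ZMod n) :
    some j ∈ v :: l := by
  have hsucc : ∀ x ∈ v :: l, ∃ i : ZMod n, addSource (dirCycle n) x (some i) ∧ some i ∈ v :: l := by
    intro x hx
    obtain ⟨_ | i, hi, hxi⟩ := h.exists_rel_mem hx
    · cases x <;> exact hxi.elim
    · exact ⟨i, hxi, hi⟩
  obtain ⟨i, -, hi⟩ := hsucc v (List.mem_cons_self ..)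
  refine ZMod.forall_of_imp_add_one (P := fun k => some k ∈ v :: l) i hi (fun k hk => ?_) j
  obtain ⟨k', hkk', hk'⟩ := hsucc _ hk
  rwa [← show k' = k + 1 from hkk']

theorem starDichromatic_addSource_dirCycle_le (hn : 2 ≤ n) :
    starDichromatic (addSource (dirCycle n)) ≤ 1 + 1 / ((n : ℝ) - 1) := by
  have : NeZero n := ⟨by omega⟩
  set s : ℝ := 1 / ((n : ℝ) - 1)
  have hn1 : (1 : ℝ) < n := by exact_mod_cast hn
  have hs : 0 < s := by positivity
  have hsn : (n : ℝ) * s = 1 + s := by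
    have : (n : ℝ) - 1 ≠ 0 := by linarith
    simp only [s]
    field_simp
    ring
  have hns : (n : ℤ) • (s : AddCircle (1 + s)) = 0 := by
    rw [← AddCircle.coe_zsmul, zsmul_eq_mul, Int.cast_natCast,
      hsn, AddCircle.coe_period]
  -- the source lies on no dicycle, so its colour is irrelevant
  let φ : ZMod n →+ AddCircle (1 + s) := ZMod.lift n ⟨zmultiplesHom _ (s : AddCircle (1 + s)), hns⟩
  refine csInf_le ⟨1, fun _ hp => hp.1⟩ ⟨by linarith, fun v => v.elim 0 φ, ?_⟩
  intro a v l hcyc hall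
  obtain ⟨k, hk⟩ := exists_intCast_mul_notMem_unitArc (p := 1 + s) hs (by linarith) a
  apply hk
  simpa [φ, AddCircle.coe_zsmul, zsmul_eq_mul] using
    hall _ (some_mem_of_isDicycle_addSource_dirCycle hcyc k)

lemma not_isWeakCircularColouring_addSource_dirCycle [NeZero n] {q : ℝ} (hq0 : 0 < q)
    (hq : q < 2) (c : Option (ZMod n) → AddCircle q) :
    ¬ IsWeakCircularColouring (addSource (dirCycle n)) q c := by
  rintro ⟨harc, hfib⟩
  have hrep : ∀ i : ZMod n, ∃ ξ ∈ Set.Ico 0 (0 + q), (ξ = 0 ∨ 1 ≤ ξ) ∧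
      c (some i) = (ξ : AddCircle q) + c none := by
    intro i
    rcases harc none (some i) trivial with h | ⟨r, hr, hrc, hr1⟩
    · exact ⟨0, by simpa using hq0, Or.inl rfl, by simp [h]⟩
    · exact ⟨r, by simpa using hr, Or.inr hr1, by rw [hrc, sub_add_cancel]⟩
  choose ξ hξ hξ01 hcξ using hrep
  have hstep : ∀ i, ξ (i + 1) = ξ i ∨ 1 ≤ ξ (i + 1) ∧ (ξ i < 1 ∨ ξ (i + 1) < ξ i) := by
    intro i
    refine eq_or_one_le_of_coe_sub hq (hξ i) (hξ (i + 1)) (hξ01 i) (hξ01 (i + 1)) ?_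
    simpa [hcξ] using harc (some i) (some (i + 1)) rfl
  have hfibre : some ⁻¹' (c ⁻¹' {c (some 0)}) = Set.univ := Set.eq_univ_of_forall fun i => by
    simp [hcξ, ZMod.apply_eq_apply_of_step hstep 0 i]
  have hacyc := (hfib (c (some 0))).comap (Option.some_injective _) fun _ _ h => h
  rw [hfibre] at hacyc
  exact not_acyclicOn_dirCycle_univ hacyc

theorem two_le_circularDichromatic_addSource_dirCycle (hn : 2 ≤ n) :
    2 ≤ circularDichromatic (addSource (dirCycle n)) := by
  have : NeZero n := ⟨by omega⟩
  obtain ⟨c, hc⟩ := exists_isWeakCircularColouring (addSource_dirCycle_irrefl hn)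
  refine le_csInf ⟨_, by exact_mod_cast Fintype.card_pos, c, hc⟩ fun q ⟨hq1, c, hc⟩ => ?_
  by_contra! hq
  exact not_isWeakCircularColouring_addSource_dirCycle (by linarith) hq c hc

end SourcedCycle

/-- the gap `χ⃗_c(D) - χ⃗*(D)` can be arbitrarily close to 1. -/
theorem stmt16 (ε : ℝ) (hε : 0 < ε) :
    ∃ (n : ℕ) (E : Fin n → Fin n → Prop), 0 < n ∧ (∀ v, ¬ E v v) ∧
      1 - ε ≤ circularDichromatic E - starDichromatic E := by
  obtain ⟨m, hm⟩ := exists_nat_ge (1 / ε)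
  have hn : 2 ≤ m + 2 := by omega
  let e := (Fintype.equivFin (Option (ZMod (m + 2)))).symm
  refine ⟨_, fun u w => addSource (dirCycle (m + 2)) (e u) (e w), Fintype.card_pos,
    fun v => addSource_dirCycle_irrefl hn _, ?_⟩
  rw [circularDichromatic_comap_equiv, starDichromatic_comap_equiv]
  have hstar := starDichromatic_addSource_dirCycle_le hn
  have hcirc := two_le_circularDichromatic_addSource_dirCycle hn
  have hgap : 1 / ((m + 2 : ℕ) - 1 : ℝ) ≤ ε := by
    rw [div_le_iff₀ (by push_cast; linarith), ← div_le_iff₀' hε]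
    push_cast
    linarith
  linarith
end

section
/- Let k ≥ 3 be odd and let W_k be the wheel graph consisting of a cycle on k vertices together with one additional hub vertex adjacent to all cycle vertices. Then χ⃗*(W_k) = χ⃗_f(W_k) = 3/2, where χ⃗*(W_k) and χ⃗_f(W_k) denote the maxima of the star dichromatic number and the fractional dichromatic number, respectively, over all orientations of W_k. -/
open Finset

variable {V : Type*}

/-!
Every orientation of `W_k`, `k` odd, has a colouring by `ℤ/3` in which any two colour classes
together induce an acyclic subdigraph. Placing colour `j` at `j/2 ∈ ℝ/(3/2)ℤ` then gives an
acyclic `3/2`-colouring, and weight `1/2` on each union of two classes gives a fractional cover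
of weight `3/2`.

To get it, give the hub colour `2`, a rim vertex `μ` colour `2` if the rim is a directed cycle
and `1` otherwise, and every other rim vertex the parity of its distance from `μ`. Classes
`0` and `1` together then contain no directed rim cycle. A directed cycle through the hub runs
along a directed rim path, and since `k` is odd the hub together with either other class meets at
most one pair of consecutive rim vertices, so the cycle can only be the spoke triangle at that
pair. A directed spoke triangle has one spoke towards and one away from the hub; by parity some
spoke triangle is not directed, and if the rim is a directed cycle even two consecutive ones are
not, `μ` being their common vertex.

Conversely, an orientation containing a directed triangle needs `3/2`: every acyclic set misses
a vertex of the triangle, and three points of `ℝ/pℤ` lying in no open arc of length `1` force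
`p ≥ 3/2`.
-/

section Digraph

variable {E : V → V → Prop}

theorem AcyclicOn.mono {A B : Set V} (h : AcyclicOn E A) (hBA : B ⊆ A) : AcyclicOn E B :=
  fun v l hd hall => h v l hd fun x hx => hBA (hall x hx)

theorem List.IsChain.exists_rel_to {R : V → V → Prop} :
    ∀ {l : List V}, l.IsChain R → ∀ x ∈ l.tail, ∃ y ∈ l, R y x
  | [], _, _, hx => by simp at hx
  | [_], _, _, hx => by simp at hx
  | a :: b :: _, h, x, hx => by
    rw [List.isChain_cons_cons] at h
    rcases List.mem_cons.mp hx with rfl | hx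
    · exact ⟨a, List.mem_cons_self, h.1⟩
    · obtain ⟨y, hy, hyx⟩ := h.2.exists_rel_to x hx
      exact ⟨y, List.mem_cons_of_mem _ hy, hyx⟩

theorem List.IsChain.exists_rel_from {R : V → V → Prop} {l : List V} (h : l.IsChain R) :
    ∀ x ∈ l.dropLast, ∃ y ∈ l, R x y := by
  intro x hx
  simpa using (List.isChain_reverse.mpr h).exists_rel_to x (by simpa [List.tail_reverse] using hx)

def SourceSinkFree (E : V → V → Prop) (C : Set V) : Prop :=
  ∀ x ∈ C, (∃ y ∈ C, E x y) ∧ ∃ y ∈ C, E y x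

theorem IsDicycle.sourceSinkFree {v : V} {l : List V} (h : IsDicycle E v l) :
    SourceSinkFree E {x | x ∈ v :: l} := by
  have hch : (v :: (l ++ [v])).IsChain E := h.2
  have hmem (y : V) : y ∈ v :: (l ++ [v]) ↔ y ∈ v :: l := by simp [or_comm]
  intro x hx
  constructor
  · obtain ⟨y, hy, hxy⟩ :=
      hch.exists_rel_from x (by simpa [List.dropLast_cons_of_ne_nil] using hx)
    exact ⟨y, (hmem y).mp hy, hxy⟩
  · obtain ⟨y, hy, hyx⟩ := hch.exists_rel_to x (by simpa [or_comm] using hx)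
    exact ⟨y, (hmem y).mp hy, hyx⟩

theorem acyclicOn_of_sourceSinkFree {A : Set V}
    (h : ∀ C ⊆ A, C.Nonempty → ¬ SourceSinkFree E C) : AcyclicOn E A :=
  fun v _ hd hall => h _ hall ⟨v, List.mem_cons_self⟩ hd.sourceSinkFree

def IsDirectedTriangle (E : V → V → Prop) (a b c : V) : Prop :=
  (E a b ∧ E b c ∧ E c a) ∨ (E a c ∧ E c b ∧ E b a)

section Triangle

variable {a b c : V}

theorem IsDirectedTriangle.not_rel_iff_rel (h : IsDirectedTriangle E a b c)
    (hasymm : ∀ x y, E x y → ¬ E y x) : ¬ (E a b ↔ E a c) := by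
  rcases h with ⟨hab, -, hca⟩ | ⟨hac, -, hba⟩
  · exact fun hiff => hasymm _ _ hca (hiff.mp hab)
  · exact fun hiff => hasymm _ _ hba (hiff.mpr hac)

theorem IsDirectedTriangle.rel_and_not_rel (h : IsDirectedTriangle E a b c)
    (hasymm : ∀ x y, E x y → ¬ E y x) (hbc : E b c) : E a b ∧ ¬ E a c := by
  rcases h with ⟨hab, -, hca⟩ | ⟨-, hcb, -⟩
  · exact ⟨hab, hasymm _ _ hca⟩
  · exact absurd hcb (hasymm _ _ hbc)

theorem IsDirectedTriangle.not_rel_and_rel (h : IsDirectedTriangle E a b c)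
    (hasymm : ∀ x y, E x y → ¬ E y x) (hcb : E c b) : ¬ E a b ∧ E a c := by
  rcases h with ⟨-, hbc, -⟩ | ⟨hac, -, hba⟩
  · exact absurd hcb (hasymm _ _ hbc)
  · exact ⟨hasymm _ _ hba, hac⟩

theorem isDirectedTriangle_of_sourceSinkFree {C : Set V} (hirr : ∀ x, ¬ E x x)
    (hasymm : ∀ x y, E x y → ¬ E y x) (hC : SourceSinkFree E C) (hsub : C ⊆ {a, b, c})
    (ha : a ∈ C) : IsDirectedTriangle E a b c := by
  have out (x : V) (hx : x ∈ C) : ∃ y, (y = a ∨ y = b ∨ y = c) ∧ y ∈ C ∧ E x y := by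
    obtain ⟨y, hy, hxy⟩ := (hC x hx).1
    exact ⟨y, hsub hy, hy, hxy⟩
  obtain ⟨y, rfl | rfl | rfl, hy, hay⟩ := out a ha
  · exact absurd hay (hirr _)
  · obtain ⟨z, rfl | rfl | rfl, hz, hbz⟩ := out _ hy
    · exact absurd hbz (hasymm _ _ hay)
    · exact absurd hbz (hirr _)
    · obtain ⟨w, rfl | rfl | rfl, -, hcw⟩ := out _ hz
      · exact Or.inl ⟨hay, hbz, hcw⟩
      · exact absurd hcw (hasymm _ _ hbz)
      · exact absurd hcw (hirr _)
  · obtain ⟨z, rfl | rfl | rfl, hz, hcz⟩ := out _ hy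
    · exact absurd hcz (hasymm _ _ hay)
    · obtain ⟨w, rfl | rfl | rfl, -, hbw⟩ := out _ hz
      · exact Or.inr ⟨hay, hcz, hbw⟩
      · exact absurd hbw (hirr _)
      · exact absurd hbw (hasymm _ _ hcz)
    · exact absurd hcz (hirr _)

end Triangle

section Orientation

variable {G : SimpleGraph V}

theorem IsOrientation.irrefl (hE : IsOrientation G E) (x : V) : ¬ E x x :=
  fun h => (hE x x).2 ⟨h, h⟩

theorem IsOrientation.asymm (hE : IsOrientation G E) (x y : V) : E x y → ¬ E y x :=
  fun h h' => (hE x y).2 ⟨h, h'⟩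

theorem IsOrientation.adj (hE : IsOrientation G E) {x y : V} (h : E x y) : G.Adj x y :=
  (hE x y).1.mp (Or.inl h)

end Orientation

end Digraph

section StarDichromatic

variable {E : V → V → Prop}

theorem starDichromatic_le {p : ℝ} {c : V → AddCircle p} (hp : 1 ≤ p)
    (hc : IsAcyclicColouring E p c) : starDichromatic E ≤ p :=
  csInf_le ⟨1, fun _ hq => hq.1⟩ ⟨hp, c, hc⟩

theorem le_starDichromatic {r : ℝ}
    (hne : ∃ p, 1 ≤ p ∧ ∃ c : V → AddCircle p, IsAcyclicColouring E p c)
    (h : ∀ p (c : V → AddCircle p), 1 ≤ p → IsAcyclicColouring E p c → r ≤ p) :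
    r ≤ starDichromatic E :=
  le_csInf hne fun p ⟨hp, c, hc⟩ => h p c hp hc

/-- Colour `j` is placed at `j / d`. The lifts of these points that fall into an arc
`(a, a + 1)` are `N / d` for integers `N ∈ (d a, d a + d)`, so `N - ⌊d a⌋ - 1 ∈ [0, d)`. -/
theorem IsAcyclicKDColouring.isAcyclicColouring {k d : ℕ} [NeZero k] {c : V → ZMod k}
    (hd : 0 < d) (hc : IsAcyclicKDColouring E k d c) :
    IsAcyclicColouring E ((k : ℝ) / d)
      fun v => (((c v).val / d : ℝ) : AddCircle ((k : ℝ) / d)) := by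
  intro a
  refine (hc ((⌊d * a⌋ + 1 : ℤ) : ZMod k)).mono ?_
  rintro v ⟨y, ⟨hay, hya⟩, hy⟩
  obtain ⟨m, hm⟩ := AddSubgroup.mem_zmultiples_iff.mp (QuotientAddGroup.eq_iff_sub_mem.mp hy)
  have hd' : (0 : ℝ) < d := Nat.cast_pos.mpr hd
  set N : ℤ := (c v).val + m * k
  have hN : (N : ℝ) = d * y := by
    rw [zsmul_eq_mul] at hm
    field_simp at hm
    push_cast [N]
    linarith
  have hlo : ⌊d * a⌋ + 1 ≤ N := Int.floor_lt.mpr (by rw [hN]; nlinarith)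
  have hhi : N < ⌊d * a⌋ + 1 + d := by
    have := Int.lt_floor_add_one (d * a)
    exact_mod_cast (show (N : ℝ) < ⌊d * a⌋ + 1 + d by rw [hN]; nlinarith)
  obtain ⟨t, ht⟩ : ∃ t : ℕ, N = ⌊d * a⌋ + 1 + t :=
    ⟨(N - (⌊d * a⌋ + 1)).toNat, by omega⟩
  refine ⟨t, by omega, ?_⟩
  have hcast : ((N : ℤ) : ZMod k) = c v := by simp [N]
  rw [← hcast, ht]
  push_cast
  ring

/-- The three arcs cut out by the points have total length `p`, and the complement of each of
them is an arc containing all three points, hence of length at least `1`. -/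
theorem three_le_two_mul_of_forall_not_mem_unitArc {p : ℝ} (hp : 0 < p) (u v w : AddCircle p)
    (h : ∀ a, ¬ (u ∈ unitArc p a ∧ v ∈ unitArc p a ∧ w ∈ unitArc p a)) :
    3 ≤ 2 * p := by
  have : Fact (0 < p) := ⟨hp⟩
  have spread : ∀ x y z s r : ℝ, (x : AddCircle p) = u → (y : AddCircle p) = v →
      (z : AddCircle p) = w → x ∈ Set.Icc s (s + r) → y ∈ Set.Icc s (s + r) →
      z ∈ Set.Icc s (s + r) → 1 ≤ r := by
    rintro x y z s r hx hy hz ⟨hx₁, hx₂⟩ ⟨hy₁, hy₂⟩ ⟨hz₁, hz₂⟩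
    by_contra! hr
    exact h (s - (1 - r) / 2) ⟨⟨x, ⟨by linarith, by linarith⟩, hx⟩,
      ⟨y, ⟨by linarith, by linarith⟩, hy⟩, ⟨z, ⟨by linarith, by linarith⟩, hz⟩⟩
  obtain ⟨τ, rfl⟩ := QuotientAddGroup.mk_surjective u
  wlog hvw : (AddCircle.equivIco p 0 (v - τ) : ℝ) ≤ AddCircle.equivIco p 0 (w - τ)
    generalizing v w
  · exact this w v (fun a ⟨hu, hw, hv⟩ => h a ⟨hu, hv, hw⟩)
      (fun x y z s r hx hy hz hx' hy' hz' => spread x z y s r hx hz hy hx' hz' hy')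
      (le_of_not_ge hvw)
  set t := (AddCircle.equivIco p 0 (v - τ) : ℝ) with ht
  set t' := (AddCircle.equivIco p 0 (w - τ) : ℝ) with ht'
  have hv : ((τ + t : ℝ) : AddCircle p) = v := by
    rw [AddCircle.coe_add, ht, AddCircle.coe_equivIco, add_sub_cancel]
  have hw : ((τ + t' : ℝ) : AddCircle p) = w := by
    rw [AddCircle.coe_add, ht', AddCircle.coe_equivIco, add_sub_cancel]
  have ht₀ : 0 ≤ t := (AddCircle.equivIco p 0 (v - τ)).2.1
  have ht'₁ : t' < p := by simpa using (AddCircle.equivIco p 0 (w - τ)).2.2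
  have hper (x : ℝ) : ((x + p : ℝ) : AddCircle p) = x := AddCircle.coe_add_period p x
  have h₁ := spread τ (τ + t) (τ + t') τ t' rfl hv hw
    ⟨by linarith, by linarith⟩ ⟨by linarith, by linarith⟩ ⟨by linarith, by linarith⟩
  have h₂ := spread (τ + p) (τ + t) (τ + t') (τ + t) (p - t) (hper τ) hv hw
    ⟨by linarith, by linarith⟩ ⟨by linarith, by linarith⟩ ⟨by linarith, by linarith⟩
  have h₃ := spread (τ + p) (τ + t + p) (τ + t') (τ + t') (p + t - t') (hper τ)
    (by rw [hper, hv]) hw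
    ⟨by linarith, by linarith⟩ ⟨by linarith, by linarith⟩ ⟨by linarith, by linarith⟩
  linarith

theorem IsDicycle.three_halves_le_of_isAcyclicColouring {a b c : V} (hd : IsDicycle E a [b, c])
    {p : ℝ} {col : V → AddCircle p} (hp : 0 < p) (hc : IsAcyclicColouring E p col) :
    3 / 2 ≤ p := by
  have := three_le_two_mul_of_forall_not_mem_unitArc hp (col a) (col b) (col c)
    fun s ⟨ha, hb, hc'⟩ => hc s a [b, c] hd (by simp [ha, hb, hc'])
  linarith

end StarDichromatic

def IsFractionalAcyclicCover [Fintype V] [DecidableEq V] (E : V → V → Prop)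
    (x : Finset V → ℝ) : Prop :=
  (∀ A, 0 ≤ x A) ∧ (∀ A : Finset V, x A ≠ 0 → AcyclicOn E ↑A) ∧
    ∀ v : V, 1 ≤ ∑ A ∈ Finset.univ.filter (fun A : Finset V => v ∈ A), x A

section FracDichromatic

variable [Fintype V] [DecidableEq V] {E : V → V → Prop}

theorem fracDichromatic_le {x : Finset V → ℝ} (hx : IsFractionalAcyclicCover E x) :
    fracDichromatic E ≤ ∑ A, x A :=
  csInf_le ⟨0, by rintro r ⟨x, hx0, -, -, rfl⟩; exact sum_nonneg fun A _ => hx0 A⟩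
    ⟨x, hx.1, hx.2.1, hx.2.2, rfl⟩

theorem le_fracDichromatic {r : ℝ} (hne : ∃ x, IsFractionalAcyclicCover E x)
    (h : ∀ x, IsFractionalAcyclicCover E x → r ≤ ∑ A, x A) : r ≤ fracDichromatic E := by
  obtain ⟨x, hx⟩ := hne
  exact le_csInf ⟨_, x, hx.1, hx.2.1, hx.2.2, rfl⟩
    fun _ ⟨x, h₁, h₂, h₃, hr⟩ => hr ▸ h x ⟨h₁, h₂, h₃⟩

theorem isFractionalAcyclicCover_of_le_card {ι : Type*} [Fintype ι] (S : ι → Finset V)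
    (hS : ∀ i, AcyclicOn E ↑(S i)) {d : ℕ} (hd : 0 < d)
    (hcov : ∀ v, d ≤ #{i | v ∈ S i}) :
    IsFractionalAcyclicCover E (fun A => ∑ i, if S i = A then (d : ℝ)⁻¹ else 0) ∧
      ∑ A, ∑ i, (if S i = A then (d : ℝ)⁻¹ else 0) = Fintype.card ι / d := by
  have hd' : (0 : ℝ) < d := Nat.cast_pos.mpr hd
  refine ⟨⟨fun A => sum_nonneg fun i _ => by split_ifs <;> positivity, fun A hA => ?_,
    fun v => ?_⟩, ?_⟩
  · obtain ⟨i, -, hi⟩ := exists_ne_zero_of_sum_ne_zero hA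
    rw [← (ite_ne_right_iff.mp hi).1]
    exact hS i
  · rw [sum_comm]
    simp_rw [sum_ite_eq, mem_filter, mem_univ, true_and, ← sum_filter, sum_const, nsmul_eq_mul]
    rw [le_mul_inv_iff₀ hd', one_mul]
    exact_mod_cast hcov v
  · rw [sum_comm]
    simp [sum_ite_eq, div_eq_mul_inv]

theorem IsAcyclicKDColouring.exists_isFractionalAcyclicCover {k d : ℕ} [NeZero k]
    {c : V → ZMod k} (hd : 0 < d) (hdk : d ≤ k) (hc : IsAcyclicKDColouring E k d c) :
    ∃ x, IsFractionalAcyclicCover E x ∧ ∑ A, x A = k / d := by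
  classical
  let S (i : ZMod k) : Finset V := {v | c v ∈ cycInterval k i d}
  have hcov (v : V) : d ≤ #{i | v ∈ S i} := calc
    d = #((range d).image fun t : ℕ => c v - t) := by
      rw [card_image_of_injOn, card_range]
      intro t ht t' ht' h
      have := congrArg ZMod.val (sub_right_injective h)
      simp only [coe_range, Set.mem_Iio] at ht ht'
      rwa [ZMod.val_natCast_of_lt (by omega), ZMod.val_natCast_of_lt (by omega)] at this
    _ ≤ #{i | v ∈ S i} := by
      refine card_le_card fun i hi => ?_
      obtain ⟨t, ht, rfl⟩ := mem_image.mp hi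
      simp only [mem_filter, mem_univ, true_and, S]
      exact ⟨t, mem_range.mp ht, by ring⟩
  obtain ⟨hx, hsum⟩ := isFractionalAcyclicCover_of_le_card S
    (fun i => (hc i).mono fun v hv => by simpa [S] using hv) hd hcov
  exact ⟨_, hx, by rw [hsum, ZMod.card]⟩

theorem IsDicycle.length_add_one_le_mul_sum {v : V} {l : List V} (hd : IsDicycle E v l)
    {x : Finset V → ℝ} (hx : IsFractionalAcyclicCover E x) :
    (l.length + 1 : ℝ) ≤ l.length * ∑ A, x A := by
  set T := (v :: l).toFinset
  have hT : #T = l.length + 1 := List.toFinset_card_of_nodup hd.1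
  have hmiss (A : Finset V) : #{u ∈ T | u ∈ A} * x A ≤ l.length * x A := by
    rcases eq_or_ne (x A) 0 with h | h
    · simp [h]
    refine mul_le_mul_of_nonneg_right ?_ (hx.1 A)
    have hne : {u ∈ T | u ∈ A} ≠ T := fun hTA => hx.2.1 A h v l hd fun y hy => by
      have : y ∈ T := List.mem_toFinset.mpr hy
      rw [← hTA] at this
      exact (mem_filter.mp this).2
    have := card_lt_card ((filter_subset _ T).ssubset_of_ne hne)
    exact_mod_cast (by omega : #{u ∈ T | u ∈ A} ≤ l.length)
  calc (l.length + 1 : ℝ) = ∑ u ∈ T, 1 := by simp [hT]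
    _ ≤ ∑ u ∈ T, ∑ A ∈ univ.filter (u ∈ ·), x A := sum_le_sum fun u _ => hx.2.2 u
    _ = ∑ A, ∑ u ∈ T with u ∈ A, x A := sum_comm' (by simp)
    _ = ∑ A, #{u ∈ T | u ∈ A} * x A := by simp_rw [sum_const, nsmul_eq_mul]
    _ ≤ ∑ A, l.length * x A := sum_le_sum fun A _ => hmiss A
    _ = l.length * ∑ A, x A := (mul_sum ..).symm

end FracDichromatic

theorem isAcyclicKDColouring_three_two {E : V → V → Prop} {c : V → ZMod 3}
    (hc : ∀ j, AcyclicOn E {x | c x ≠ j}) : IsAcyclicKDColouring E 3 2 c := by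
  intro i
  refine (hc (i + 2)).mono ?_
  rintro x ⟨t, ht, hx⟩
  simp only [Set.mem_ofPred_eq, hx]
  interval_cases t <;> fin_cases i <;> decide

namespace ZMod

variable {k : ℕ}

theorem exists_iff_add_one_of_odd (hodd : Odd k) (P : ZMod k → Prop) :
    ∃ i, P i ↔ P (i + 1) := by
  by_contra! h
  have key (n : ℕ) : P n ↔ (P 0 ↔ Even n) := by
    induction n with
    | zero => simp
    | succ n ih =>
      have := h n
      rw [Nat.cast_succ, Nat.even_add_one]
      tauto
  have := key k
  rw [ZMod.natCast_self] at this
  have := Nat.not_even_iff_odd.mpr hodd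
  tauto

theorem exists_not_sub_one_not_of_odd (hodd : Odd k) (T P : ZMod k → Prop)
    (hT : ∀ i, T i → P i ∧ ¬ P (i + 1)) : ∃ μ, ¬ T (μ - 1) ∧ ¬ T μ := by
  obtain ⟨i, hi⟩ := exists_iff_add_one_of_odd hodd P
  by_cases hP : P i
  · exact ⟨i, fun hT' => (hT _ hT').2 (by rwa [sub_add_cancel]),
      fun hT' => (hT _ hT').2 (hi.mp hP)⟩
  · exact ⟨i + 1, fun hT' => hP (hT _ (by rwa [add_sub_cancel_right] at hT')).1,
      fun hT' => hP (hi.mpr (hT _ hT').1)⟩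

theorem natCast_ne_zero_of_lt {a : ℕ} (ha : 0 < a) (hak : a < k) : (a : ZMod k) ≠ 0 := by
  rw [Ne, ZMod.natCast_eq_zero_iff]
  exact Nat.not_dvd_of_pos_of_lt ha hak

theorem add_two_not_mem_oddOffsets (hk : 3 ≤ k) (μ : ZMod k) :
    μ + ((2 : ℕ) : ZMod k) ∉ {i | i = μ ∨ ¬ Even (i - μ).val} := by
  rintro (h | h)
  · exact natCast_ne_zero_of_lt (k := k) (a := 2) two_pos (by omega) (by simpa using h)
  · rw [add_sub_cancel_left, ZMod.val_natCast_of_lt (by omega)] at h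
    exact h even_two

theorem add_one_not_mem_evenOffsets (hk : 2 ≤ k) (μ : ZMod k) :
    μ + ((1 : ℕ) : ZMod k) ∉ {i | Even (i - μ).val} := by
  rw [Set.mem_ofPred_eq, add_sub_cancel_left, ZMod.val_natCast_of_lt (by omega)]
  exact Nat.not_even_one

variable [NeZero k]

theorem even_val_neg_one (hodd : Odd k) : Even (-1 : ZMod k).val := by
  obtain ⟨n, rfl⟩ : ∃ n, k = n + 1 := ⟨k - 1, by have := NeZero.ne k; omega⟩
  rw [ZMod.val_neg_one]
  simpa [Nat.odd_add_one, Nat.not_odd_iff_even] using hodd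

theorem even_val_add_one_iff {x : ZMod k} (hx : x ≠ -1) : Even (x + 1).val ↔ ¬ Even x.val := by
  have hlt : x.val + 1 < k := by
    rcases (Nat.succ_le_of_lt (ZMod.val_lt x)).lt_or_eq with h | h
    · exact h
    · refine absurd ?_ hx
      rw [eq_neg_iff_add_eq_zero, ← ZMod.natCast_zmod_val x, ← Nat.cast_succ, h,
        ZMod.natCast_self]
  have : (x + 1).val = x.val + 1 := by
    rw [← ZMod.natCast_zmod_val x, ← Nat.cast_succ, ZMod.val_natCast_of_lt hlt,
      ZMod.natCast_zmod_val]
  rw [this, Nat.even_add_one]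

theorem eq_of_mem_oddOffsets (hodd : Odd k) {i μ : ZMod k} (h₁ : i = μ ∨ ¬ Even (i - μ).val)
    (h₂ : i + 1 = μ ∨ ¬ Even (i + 1 - μ).val) : i = μ := by
  by_cases hx : i - μ = -1
  · exact h₁.resolve_right fun h => h (hx ▸ even_val_neg_one hodd)
  · rw [show i + 1 - μ = i - μ + 1 by ring, even_val_add_one_iff hx, not_not] at h₂
    refine h₁.resolve_right fun h => h₂.elim (fun h' => hx ?_) h
    rw [← h']
    ring

theorem eq_sub_one_of_even_offsets {i μ : ZMod k} (h₁ : Even (i - μ).val)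
    (h₂ : Even (i + 1 - μ).val) : i = μ - 1 := by
  by_contra hne
  have hx : i - μ ≠ -1 := fun h => hne (by linear_combination h)
  rw [show i + 1 - μ = i - μ + 1 by ring, even_val_add_one_iff hx] at h₂
  exact h₂ h₁

theorem mem_of_add_one_mem {S : Set (ZMod k)} {x : ZMod k} (hx : x ∈ S)
    (h : ∀ y ∈ S, y + 1 ∈ S) (y : ZMod k) : y ∈ S := by
  have key (n : ℕ) : x + n ∈ S := by
    induction n with
    | zero => simpa using hx
    | succ n ih => simpa [add_assoc] using h _ ih
  simpa using key (y - x).val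

end ZMod

section Wheel

variable {k : ℕ} {E : Option (ZMod k) → Option (ZMod k) → Prop} {C : Set (Option (ZMod k))}

theorem wheelGraph_adj_some {i : ZMod k} {w : Option (ZMod k)}
    (h : (wheelGraph k).Adj (some i) w) : w = none ∨ w = some (i + 1) ∨ w = some (i - 1) := by
  rcases w with _ | j
  · exact Or.inl rfl
  · rw [wheelGraph, SimpleGraph.fromRel_adj] at h
    rcases h.2 with h | h
    · exact Or.inr (Or.inl (congrArg some h))
    · exact Or.inr (Or.inr (congrArg some (eq_sub_of_add_eq h.symm)))

theorem SourceSinkFree.wheel_succ_mem (hE : IsOrientation (wheelGraph k) E)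
    (hC : SourceSinkFree E C) {x : ZMod k} (hx : some x ∈ C) :
    some (x + 1) ∈ C ∨ (none ∈ C ∧ some (x - 1) ∈ C) := by
  obtain ⟨⟨y, hy, hxy⟩, ⟨z, hz, hzx⟩⟩ := hC _ hx
  have hyz : y ≠ z := by rintro rfl; exact hE.asymm _ _ hxy hzx
  rcases wheelGraph_adj_some (hE.adj hxy) with rfl | rfl | rfl <;>
    rcases wheelGraph_adj_some (hE.adj hzx).symm with rfl | rfl | rfl <;>
    first | exact Or.inl ‹_› | exact Or.inr ⟨‹_›, ‹_›⟩ | exact absurd rfl hyz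

def IsDirectedRim (E : Option (ZMod k) → Option (ZMod k) → Prop) : Prop :=
  (∀ i, E (some i) (some (i + 1))) ∨ ∀ i, E (some (i + 1)) (some i)

/-- As `k` is odd, `μ - 1, μ` is the only pair of consecutive rim vertices whose forward
distances from `μ` have the same parity. -/
def wheelColouring (μ : ZMod k) (a : ZMod 3) : Option (ZMod k) → ZMod 3
  | none => 2
  | some i => if i = μ then a else if Even (i - μ).val then 0 else 1

theorem wheelColouring_ne_zero_subset (μ : ZMod k) (a : ZMod 3) :
    {x | wheelColouring μ a x ≠ 0} ⊆
      insert none (some '' {i | i = μ ∨ ¬ Even (i - μ).val}) := by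
  rintro (_ | i) hi
  · exact Or.inl rfl
  · refine Or.inr ⟨i, ?_, rfl⟩
    simp only [wheelColouring, Set.mem_ofPred_eq] at hi ⊢
    split_ifs at hi <;> tauto

theorem wheelColouring_ne_one_subset (μ : ZMod k) (a : ZMod 3) :
    {x | wheelColouring μ a x ≠ 1} ⊆ insert none (some '' {i | Even (i - μ).val}) := by
  rintro (_ | i) hi
  · exact Or.inl rfl
  · refine Or.inr ⟨i, ?_, rfl⟩
    simp only [wheelColouring, Set.mem_ofPred_eq] at hi ⊢
    split_ifs at hi <;> simp_all

theorem wheelColouring_one_ne_one_subset (μ : ZMod k) :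
    {x | wheelColouring μ 1 x ≠ 1} ⊆
      insert none (some '' {i | Even (i - μ).val ∧ i ≠ μ}) := by
  rintro (_ | i) hi
  · exact Or.inl rfl
  · refine Or.inr ⟨i, ?_, rfl⟩
    simp only [wheelColouring, Set.mem_ofPred_eq] at hi ⊢
    split_ifs at hi <;> simp_all

theorem wheelColouring_two_ne_two_subset (μ : ZMod k) :
    {x | wheelColouring μ 2 x ≠ 2} ⊆ some '' {i | i ≠ μ} := by
  rintro (_ | i) hi
  · exact absurd rfl hi
  · refine ⟨i, ?_, rfl⟩
    rintro rfl
    simp [wheelColouring] at hi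

theorem wheelColouring_ne_two_subset (μ : ZMod k) (a : ZMod 3) :
    {x | wheelColouring μ a x ≠ 2} ⊆ Set.range some := by
  rintro (_ | i) hi
  · exact absurd rfl hi
  · exact ⟨i, rfl⟩

variable [NeZero k]

theorem SourceSinkFree.wheel_forall_some_mem (hE : IsOrientation (wheelGraph k) E)
    (hC : SourceSinkFree E C) (hnone : none ∉ C) (hne : C.Nonempty) (i : ZMod k) :
    some i ∈ C := by
  obtain ⟨_ | x, hx⟩ := hne
  · exact absurd hx hnone
  · refine ZMod.mem_of_add_one_mem (S := {i | some i ∈ C}) hx (fun y hy => ?_) i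
    exact (hC.wheel_succ_mem hE hy).resolve_right fun h => hnone h.1

theorem SourceSinkFree.wheel_isDirectedRim (hE : IsOrientation (wheelGraph k) E)
    (hC : SourceSinkFree E C) (hnone : none ∉ C) (hall : ∀ i, some i ∈ C) :
    IsDirectedRim E := by
  have out (i : ZMod k) : E (some (i + 1)) (some (i + 1 + 1)) ∨ E (some (i + 1)) (some i) := by
    obtain ⟨y, hy, hxy⟩ := (hC _ (hall (i + 1))).1
    rcases wheelGraph_adj_some (hE.adj hxy) with rfl | rfl | rfl
    · exact absurd hy hnone
    · exact Or.inl hxy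
    · exact Or.inr (by simpa using hxy)
  by_cases hfwd : ∃ c, E (some c) (some (c + 1))
  · obtain ⟨c, hc⟩ := hfwd
    exact Or.inl (ZMod.mem_of_add_one_mem (S := {i | E (some i) (some (i + 1))}) hc
      fun i hi => (out i).resolve_right (hE.asymm _ _ hi))
  · exact Or.inr fun i => (out i).resolve_left fun h => hfwd ⟨_, h⟩

theorem wheel_acyclicOn_image_some (hE : IsOrientation (wheelGraph k) E) {B : Set (ZMod k)}
    {i₀ : ZMod k} (hi₀ : i₀ ∉ B) : AcyclicOn E (some '' B) := by
  refine acyclicOn_of_sourceSinkFree fun C hCB hne hC => hi₀ ?_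
  have hnone : none ∉ C := fun h => by simpa using hCB h
  simpa using hCB (hC.wheel_forall_some_mem hE hnone hne i₀)

theorem wheel_acyclicOn_range_some (hE : IsOrientation (wheelGraph k) E)
    (hrim : ¬ IsDirectedRim E) : AcyclicOn E (Set.range some) := by
  refine acyclicOn_of_sourceSinkFree fun C hCB hne hC => hrim ?_
  have hnone : none ∉ C := fun h => by simpa using hCB h
  exact hC.wheel_isDirectedRim hE hnone (hC.wheel_forall_some_mem hE hnone hne)

/-- On a directed cycle through the hub, every rim vertex has a rim neighbour on the cycle, so
the rim vertices of the cycle are `μ` and `μ + 1`. -/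
theorem wheel_acyclicOn_insert_none_image (hE : IsOrientation (wheelGraph k) E)
    {B : Set (ZMod k)} {i₀ μ : ZMod k} (hi₀ : i₀ ∉ B)
    (hpair : ∀ i ∈ B, i + 1 ∈ B → i = μ)
    (hμ : ¬ IsDirectedTriangle E none (some μ) (some (μ + 1))) :
    AcyclicOn E (insert none (some '' B)) := by
  refine acyclicOn_of_sourceSinkFree fun C hCB hne hC => ?_
  have hB {i : ZMod k} (hi : some i ∈ C) : i ∈ B := by simpa using hCB hi
  by_cases hnone : none ∈ C
  · refine hμ (isDirectedTriangle_of_sourceSinkFree hE.irrefl hE.asymm hC ?_ hnone)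
    rintro (_ | x) hx
    · exact Or.inl rfl
    · rcases hC.wheel_succ_mem hE hx with h | ⟨-, h⟩
      · exact Or.inr (Or.inl (by rw [hpair x (hB hx) (hB h)]))
      · have := hpair _ (hB h) (by simpa using hB hx)
        exact Or.inr (Or.inr (by rw [← this, sub_add_cancel]; rfl))
  · exact hi₀ (hB (hC.wheel_forall_some_mem hE hnone hne i₀))

theorem wheelColouring_two_acyclicOn (hk : 3 ≤ k) (hodd : Odd k)
    (hE : IsOrientation (wheelGraph k) E) {μ : ZMod k}
    (hμ₁ : ¬ IsDirectedTriangle E none (some (μ - 1)) (some (μ - 1 + 1)))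
    (hμ : ¬ IsDirectedTriangle E none (some μ) (some (μ + 1))) (j : ZMod 3) :
    AcyclicOn E {x | wheelColouring μ 2 x ≠ j} := by
  fin_cases j
  · exact (wheel_acyclicOn_insert_none_image hE (ZMod.add_two_not_mem_oddOffsets hk μ)
      (fun i hi hi' => ZMod.eq_of_mem_oddOffsets hodd hi hi') hμ).mono
      (wheelColouring_ne_zero_subset μ 2)
  · exact (wheel_acyclicOn_insert_none_image hE
      (ZMod.add_one_not_mem_evenOffsets (by omega) μ)
      (fun i hi hi' => ZMod.eq_sub_one_of_even_offsets hi hi') hμ₁).mono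
      (wheelColouring_ne_one_subset μ 2)
  · exact (wheel_acyclicOn_image_some hE (i₀ := μ) (by simp)).mono
      (wheelColouring_two_ne_two_subset μ)

theorem wheelColouring_one_acyclicOn (hk : 3 ≤ k) (hodd : Odd k)
    (hE : IsOrientation (wheelGraph k) E) {μ : ZMod k}
    (hμ : ¬ IsDirectedTriangle E none (some μ) (some (μ + 1))) (hrim : ¬ IsDirectedRim E)
    (j : ZMod 3) : AcyclicOn E {x | wheelColouring μ 1 x ≠ j} := by
  fin_cases j
  · exact (wheel_acyclicOn_insert_none_image hE (ZMod.add_two_not_mem_oddOffsets hk μ)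
      (fun i hi hi' => ZMod.eq_of_mem_oddOffsets hodd hi hi') hμ).mono
      (wheelColouring_ne_zero_subset μ 1)
  · refine (wheel_acyclicOn_insert_none_image hE (i₀ := μ) (fun h => h.2 rfl)
      (fun i hi hi' => ?_) hμ).mono (wheelColouring_one_ne_one_subset μ)
    exact absurd (by rw [ZMod.eq_sub_one_of_even_offsets hi.1 hi'.1, sub_add_cancel]) hi'.2
  · exact (wheel_acyclicOn_range_some hE hrim).mono (wheelColouring_ne_two_subset μ 1)

theorem wheel_exists_colouring (hk : 3 ≤ k) (hodd : Odd k) (hE : IsOrientation (wheelGraph k) E) :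
    ∃ c : Option (ZMod k) → ZMod 3, ∀ j, AcyclicOn E {x | c x ≠ j} := by
  by_cases hrim : IsDirectedRim E
  · obtain ⟨μ, hμ₁, hμ⟩ : ∃ μ : ZMod k,
        ¬ IsDirectedTriangle E none (some (μ - 1)) (some (μ - 1 + 1)) ∧
        ¬ IsDirectedTriangle E none (some μ) (some (μ + 1)) := by
      let T i := IsDirectedTriangle E none (some i) (some (i + 1))
      rcases hrim with hfwd | hbwd
      · exact ZMod.exists_not_sub_one_not_of_odd hodd T (fun i => E none (some i))
          fun i hT => hT.rel_and_not_rel hE.asymm (hfwd i)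
      · exact ZMod.exists_not_sub_one_not_of_odd hodd T (fun i => ¬ E none (some i))
          fun i hT => (hT.not_rel_and_rel hE.asymm (hbwd i)).imp id not_not.mpr
    exact ⟨_, wheelColouring_two_acyclicOn hk hodd hE hμ₁ hμ⟩
  · obtain ⟨μ, hμ⟩ := ZMod.exists_iff_add_one_of_odd hodd fun i => E none (some i)
    exact ⟨_, wheelColouring_one_acyclicOn hk hodd hE
      (fun hT => hT.not_rel_iff_rel hE.asymm hμ) hrim⟩

theorem wheel_exists_isAcyclicColouring (hk : 3 ≤ k) (hodd : Odd k)
    (hE : IsOrientation (wheelGraph k) E) :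
    ∃ c : Option (ZMod k) → AddCircle (3 / 2 : ℝ), IsAcyclicColouring E (3 / 2) c := by
  obtain ⟨c, hc⟩ := wheel_exists_colouring hk hodd hE
  have := (isAcyclicKDColouring_three_two hc).isAcyclicColouring two_pos
  rw [Nat.cast_ofNat, Nat.cast_ofNat] at this
  exact ⟨_, this⟩

theorem wheel_exists_isFractionalAcyclicCover (hk : 3 ≤ k) (hodd : Odd k)
    (hE : IsOrientation (wheelGraph k) E) :
    ∃ x, IsFractionalAcyclicCover E x ∧ ∑ A, x A = 3 / 2 := by
  obtain ⟨c, hc⟩ := wheel_exists_colouring hk hodd hE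
  obtain ⟨x, hx, hsum⟩ :=
    (isAcyclicKDColouring_three_two hc).exists_isFractionalAcyclicCover two_pos (by norm_num)
  exact ⟨x, hx, by rw [hsum]; norm_num⟩

end Wheel

def wheelTriangleOrientation (k : ℕ) : Option (ZMod k) → Option (ZMod k) → Prop
  | none, some i => i = 0
  | some i, none => i ≠ 0
  | some i, some j => j = i + 1
  | none, none => False

section TriangleOrientation

variable {k : ℕ}

theorem isOrientation_wheelTriangleOrientation (hk : 3 ≤ k) :
    IsOrientation (wheelGraph k) (wheelTriangleOrientation k) := by
  have h1 : ((1 : ℕ) : ZMod k) ≠ 0 := ZMod.natCast_ne_zero_of_lt one_pos (by omega)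
  have h2 : ((2 : ℕ) : ZMod k) ≠ 0 := ZMod.natCast_ne_zero_of_lt two_pos (by omega)
  rintro (_ | i) (_ | j) <;>
    simp only [wheelGraph, SimpleGraph.fromRel_adj, wheelTriangleOrientation, ne_eq,
      reduceCtorEq, not_false_eq_true, Option.some.injEq]
  · tauto
  · tauto
  · tauto
  refine ⟨⟨fun h => ⟨?_, h⟩, And.right⟩, ?_⟩
  · rintro rfl
    exact h1 (by rcases h with h | h <;> push_cast <;> linear_combination -h)
  · rintro ⟨rfl, h⟩
    exact h2 (by push_cast; linear_combination -h)

theorem isDicycle_wheelTriangleOrientation (hk : 3 ≤ k) :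
    IsDicycle (wheelTriangleOrientation k) none [some 0, some 1] := by
  have h1 : ((1 : ℕ) : ZMod k) ≠ 0 := ZMod.natCast_ne_zero_of_lt one_pos (by omega)
  rw [Nat.cast_one] at h1
  refine ⟨by simp [h1.symm], ?_⟩
  show List.IsChain _ _
  simp [wheelTriangleOrientation, h1]

variable [NeZero k]

theorem starDichromatic_wheel_le (hk : 3 ≤ k) (hodd : Odd k)
    {E : Option (ZMod k) → Option (ZMod k) → Prop} (hE : IsOrientation (wheelGraph k) E) :
    starDichromatic E ≤ 3 / 2 :=
  let ⟨_, hc⟩ := wheel_exists_isAcyclicColouring hk hodd hE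
  starDichromatic_le (by norm_num) hc

theorem fracDichromatic_wheel_le (hk : 3 ≤ k) (hodd : Odd k)
    {E : Option (ZMod k) → Option (ZMod k) → Prop} (hE : IsOrientation (wheelGraph k) E) :
    fracDichromatic E ≤ 3 / 2 :=
  let ⟨_, hx, hsum⟩ := wheel_exists_isFractionalAcyclicCover hk hodd hE
  hsum ▸ fracDichromatic_le hx

theorem starDichromatic_wheelTriangleOrientation (hk : 3 ≤ k) (hodd : Odd k) :
    starDichromatic (wheelTriangleOrientation k) = 3 / 2 := by
  have hE := isOrientation_wheelTriangleOrientation hk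
  refine (starDichromatic_wheel_le hk hodd hE).antisymm (le_starDichromatic ?_ ?_)
  · exact ⟨_, by norm_num, wheel_exists_isAcyclicColouring hk hodd hE⟩
  · intro p c hp hc
    exact (isDicycle_wheelTriangleOrientation hk).three_halves_le_of_isAcyclicColouring
      (by linarith) hc

theorem fracDichromatic_wheelTriangleOrientation (hk : 3 ≤ k) (hodd : Odd k) :
    fracDichromatic (wheelTriangleOrientation k) = 3 / 2 := by
  have hE := isOrientation_wheelTriangleOrientation hk
  obtain ⟨x, hx, -⟩ := wheel_exists_isFractionalAcyclicCover hk hodd hE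
  refine (fracDichromatic_wheel_le hk hodd hE).antisymm
    (le_fracDichromatic ⟨x, hx⟩ fun y hy => ?_)
  have := (isDicycle_wheelTriangleOrientation hk).length_add_one_le_mul_sum hy
  norm_num at this
  linarith

end TriangleOrientation

/-- for odd `k ≥ 3`, the wheel satisfies
`χ⃗*(W_k) = χ⃗_f(W_k) = 3/2`. -/
theorem stmt18 (k : ℕ) [NeZero k] (hk : 3 ≤ k) (hodd : Odd k) :
    starDichromaticGraph (wheelGraph k) = 3 / 2 ∧
    fracDichromaticGraph (wheelGraph k) = 3 / 2 := by
  have hE₀ := isOrientation_wheelTriangleOrientation hk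
  constructor
  · refine IsGreatest.csSup_eq
      ⟨⟨_, hE₀, (starDichromatic_wheelTriangleOrientation hk hodd).symm⟩, ?_⟩
    rintro _ ⟨E, hE, rfl⟩
    exact starDichromatic_wheel_le hk hodd hE
  · refine IsGreatest.csSup_eq
      ⟨⟨_, hE₀, (fracDichromatic_wheelTriangleOrientation hk hodd).symm⟩, ?_⟩
    rintro _ ⟨E, hE, rfl⟩
    exact fracDichromatic_wheel_le hk hodd hE
end
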